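/- arXiv:2403.09184 — 6 statements merged into one kernel-verified Lean document; each statement's English description precedes it below -/
import Mathlib

section
/- Let (R,B) be an end component of a finite MDP M. Then for any two states s, s' ∈ R the maximal probability of reaching s' from s equals 1, i.e. val_{{s'}}(s) = 1, and consequently for every target set T ⊆ S one has val_T(s) = val_T(s'). -/
/-!
STATEMENT 0: Let (R,B) be an end component of a finite MDP M. Then for any two
states s, s' ∈ R the maximal probability of reaching s' from s equals 1, i.e.
val_{{s'}}(s) = 1, and consequently for every target set T ⊆ S one has
val_T(s) = val_T(s').
-/

open Finset
open scoped Classical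

/-- A finite MDP with per-state disjoint action sets: `stOf` assigns to every
action the unique state at which it is available. -/
structure MDP (S A : Type) [Fintype S] [DecidableEq S] [Fintype A] [DecidableEq A] where
  act : S → Finset A
  act_ne : ∀ s, (act s).Nonempty
  stOf : A → S
  stOf_spec : ∀ s a, a ∈ act s → stOf a = s
  P : S → A → S → ℝ
  P_nonneg : ∀ s a s', 0 ≤ P s a s'
  P_sum : ∀ s, ∀ a ∈ act s, ∑ s', P s a s' = 1

/-- One step inside the sub-system `(R, B)`: from `x` a `B`-action available at `x`
leads with positive probability to `y`, both states lying in `R`. -/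
def stepIn {σ α : Type*} (act : σ → Finset α) (P : σ → α → σ → ℝ)
    (R : Finset σ) (B : Finset α) (x y : σ) : Prop :=
  x ∈ R ∧ y ∈ R ∧ ∃ a ∈ B, a ∈ act x ∧ 0 < P x a y

/-- End component: a nonempty pair `(R, B)` of states and actions such that
`B`-actions never leave `R` and `R` is strongly connected using only `B`-actions. -/
def IsEC {σ α : Type*} (act : σ → Finset α) (P : σ → α → σ → ℝ)
    (R : Finset σ) (B : Finset α) : Prop :=
  R.Nonempty ∧ B.Nonempty ∧
  (∀ a ∈ B, ∃ s ∈ R, a ∈ act s) ∧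
  (∀ s ∈ R, ∀ a ∈ B, a ∈ act s → ∀ s', 0 < P s a s' → s' ∈ R) ∧
  (∀ s ∈ R, ∀ s' ∈ R, Relation.ReflTransGen (stepIn act P R B) s s')

/-- `IsValue act hne P T v` states that `v` is the value function for reaching `T`:
the least fixed point of the Bellman operator in the pointwise order on `[0,1]^S`. -/
def IsValue {σ α : Type*} [Fintype σ] [DecidableEq σ] (act : σ → Finset α)
    (hne : ∀ s, (act s).Nonempty) (P : σ → α → σ → ℝ) (T : Finset σ) (v : σ → ℝ) :
    Prop :=
  (∀ s, 0 ≤ v s ∧ v s ≤ 1) ∧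
  (∀ s, v s = if s ∈ T then 1 else (act s).sup' (hne s) fun a => ∑ s', P s a s' * v s') ∧
  (∀ w : σ → ℝ, (∀ s, 0 ≤ w s ∧ w s ≤ 1) →
    (∀ s, w s = if s ∈ T then 1 else (act s).sup' (hne s) fun a => ∑ s', P s a s' * w s') →
    ∀ s, v s ≤ w s)

variable {S A : Type} [Fintype S] [DecidableEq S] [Fintype A] [DecidableEq A]

/-- Any fixed point of the Bellman operator (bounded in `[0,1]`) is constant on an
end component. -/
lemma ec_const (M : MDP S A) (R : Finset S) (B : Finset A)
    (hEC : IsEC M.act M.P R B) (T : Finset S) (v : S → ℝ)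
    (hv : IsValue M.act M.act_ne M.P T v) :
    ∀ s ∈ R, ∀ s' ∈ R, v s = v s' := by
  obtain ⟨hRne, hBne, hBst, hclose, hconn⟩ := hEC
  obtain ⟨hbd, hfix, -⟩ := hv
  obtain ⟨x0, hx0R, hx0min⟩ := R.exists_min_image v hRne
  set m := v x0 with hm
  by_cases hm1 : m = 1
  · intro s hs s' hs'
    have h1 : ∀ x ∈ R, v x = 1 := fun x hx =>
      le_antisymm (hbd x).2 (hm1 ▸ hx0min x hx)
    rw [h1 s hs, h1 s' hs']
  · have key : ∀ x, Relation.ReflTransGen (stepIn M.act M.P R B) x0 x →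
        v x = m ∧ x ∉ T := by
      intro x hx
      induction hx with
      | refl =>
        refine ⟨rfl, fun hT => ?_⟩
        have h1 := hfix x0
        rw [if_pos hT] at h1
        exact hm1 h1
      | @tail b c hstep hbc ih =>
        obtain ⟨hvb, hbT⟩ := ih
        obtain ⟨hbR, hcR, a, haB, haA, hPpos⟩ := hbc
        have hb : v b = (M.act b).sup' (M.act_ne b)
            fun a => ∑ z, M.P b a z * v z := by
          rw [hfix b, if_neg hbT]
        have hle : ∑ z, M.P b a z * v z ≤ m := by
          rw [← hvb, hb]
          exact Finset.le_sup' (fun a => ∑ z, M.P b a z * v z) haA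
        have hterm : ∀ z ∈ Finset.univ, 0 ≤ M.P b a z * (v z - m) := by
          intro z _
          rcases eq_or_lt_of_le (M.P_nonneg b a z) with h0 | hpos
          · rw [← h0]; simp
          · have hzR : z ∈ R := hclose b hbR a haB haA z hpos
            exact mul_nonneg hpos.le (sub_nonneg.2 (hx0min z hzR))
        have hsum0 : ∑ z, M.P b a z * (v z - m) = 0 := by
          have h1 : ∑ z, M.P b a z * (v z - m)
              = (∑ z, M.P b a z * v z) - (∑ z, M.P b a z) * m := by
            rw [Finset.sum_mul, ← Finset.sum_sub_distrib]
            exact Finset.sum_congr rfl fun z _ => by ring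
          have h2 : ∑ z, M.P b a z * (v z - m) ≤ 0 := by
            rw [h1, M.P_sum b a haA, one_mul]
            linarith
          exact le_antisymm h2 (Finset.sum_nonneg hterm)
        have hc0 : M.P b a c * (v c - m) = 0 :=
          (Finset.sum_eq_zero_iff_of_nonneg hterm).1 hsum0 c (Finset.mem_univ c)
        have hvc : v c = m := by
          rcases mul_eq_zero.1 hc0 with h | h
          · exact absurd h hPpos.ne'
          · linarith [sub_eq_zero.1 h]
        refine ⟨hvc, fun hT => ?_⟩
        have h1 := hfix c
        rw [if_pos hT] at h1
        exact hm1 (hvc ▸ h1)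
    intro x hx y hy
    rw [(key x (hconn x0 hx0R x hx)).1, (key y (hconn x0 hx0R y hy)).1]

/-- Inside an end component, every state reaches every other state with maximal
probability 1; consequently all states of an end component have the same value for
any target set. -/
theorem ec_same_value (M : MDP S A) (R : Finset S) (B : Finset A)
    (hEC : IsEC M.act M.P R B) (s s' : S) (hs : s ∈ R) (hs' : s' ∈ R) :
    (∀ v : S → ℝ, IsValue M.act M.act_ne M.P ({s'} : Finset S) v → v s = 1) ∧
    (∀ T : Finset S, ∀ v : S → ℝ, IsValue M.act M.act_ne M.P T v → v s = v s') := by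
  constructor
  · intro v hv
    have h1 : v s' = 1 := by
      rw [hv.2.1 s', if_pos (Finset.mem_singleton_self s')]
    rw [ec_const M R B hEC _ v hv s hs s' hs', h1]
  · intro T v hv
    exact ec_const M R B hEC T v hv s hs s' hs'
end

section
/- Let ϱ = s_1 a_1 s_2 … a_{n−1} s_n be a finite path in the MDP M. Then there exist m ≤ n and indices i_1 < i_2 < … < i_m with 1 ≤ i_j < i_{j+1} ≤ n such that ϱ^c = collapsed(s_{i_1}) a_{i_1} collapsed(s_{i_2}) a_{i_2} … a_{i_{m−1}} collapsed(s_{i_m}) is a finite path in the collapsed MDP M^c, and moreover collapsed(s_1) = collapsed(s_{i_1}) and collapsed(s_n) = collapsed(s_{i_m}). -/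
/-!
STATEMENT 1: For every finite path ϱ = s₁ a₁ … a_{n−1} s_n of the MDP M there are
m ≤ n and increasing indices i₁ < … < i_m such that
collapsed(s_{i₁}) a_{i₁} … a_{i_{m−1}} collapsed(s_{i_m}) is a finite path of the
collapsed MDP M^c with collapsed(s₁) = collapsed(s_{i₁}) and
collapsed(s_n) = collapsed(s_{i_m}).
-/

open Finset
open scoped Classical

/-- A finite path of length `N`: states `st 0, …, st N` and actions
`ac 0, …, ac (N−1)`, each action available and each transition of positive
probability. -/
def IsPath {σ α : Type*} (act : σ → Finset α) (P : σ → α → σ → ℝ)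
    (N : ℕ) (st : ℕ → σ) (ac : ℕ → α) : Prop :=
  ∀ k, k < N → ac k ∈ act (st k) ∧ 0 < P (st k) (ac k) (st (k + 1))

/-- Maximal end component. -/
def IsMEC {σ α : Type*} (act : σ → Finset α) (P : σ → α → σ → ℝ)
    (R : Finset σ) (B : Finset α) : Prop :=
  IsEC act P R B ∧
  ∀ R' B', IsEC act P R' B' → R ⊆ R' → B ⊆ B' → R = R' ∧ B = B'

/-- The state space of the collapsed MDP (before restricting to valid states):
original states, representative states `s_{(R_i,B_i)}` (one per collapsed EC), and
the two fresh states `s₊` (`Sum.inr true`) and `s₋` (`Sum.inr false`). -/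
abbrev CS (S : Type) (n : ℕ) : Type := (S ⊕ Fin n) ⊕ Bool

/-- The action alphabet of the collapsed MDP: original actions, the `rem_i`
actions (one per collapsed EC), and the self-loop actions `a₊` (`Sum.inr true`)
and `a₋` (`Sum.inr false`). -/
abbrev CA (A : Type) (n : ℕ) : Type := (A ⊕ Fin n) ⊕ Bool

variable {S A : Type} [Fintype S] [DecidableEq S] [Fintype A] [DecidableEq A] {n : ℕ}

/-- A collapsed state is valid if it is not an original state belonging to one of
the collapsed ECs. -/
def Valid (R : Fin n → Finset S) (x : CS S n) : Prop :=
  ∀ s : S, x = Sum.inl (Sum.inl s) → ∀ i, s ∉ R i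

instance {R : Fin n → Finset S} : DecidablePred (Valid R) := fun x =>
  inferInstanceAs (Decidable (∀ s : S, x = Sum.inl (Sum.inl s) → ∀ i, s ∉ R i))

/-- The state space `S^c` of the collapsed MDP. -/
abbrev CSv (R : Fin n → Finset S) : Type _ := {x : CS S n // Valid R x}

/-- `states(s^c)`: the set of original states represented by a collapsed state. -/
def statesOf (R : Fin n → Finset S) : CS S n → Finset S
  | Sum.inl (Sum.inl s) => {s}
  | Sum.inl (Sum.inr i) => R i
  | Sum.inr _ => ∅

/-- The map `collapsed : S → S^c`, sending a state to its representative if it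
belongs to a collapsed EC and to itself otherwise. -/
noncomputable def collapseV (R : Fin n → Finset S) (s : S) : CSv R :=
  if h : ∃ i, s ∈ R i then
    ⟨Sum.inl (Sum.inr (Classical.choose h)), by intro t ht; simp at ht⟩
  else
    ⟨Sum.inl (Sum.inl s), by
      intro t ht i hi
      simp only [Sum.inl.injEq] at ht
      subst ht
      exact h ⟨i, hi⟩⟩

/-- The terminal states `s₊ = term R true` and `s₋ = term R false` of the
collapsed MDP. -/
def term (R : Fin n → Finset S) (b : Bool) : CSv R :=
  ⟨Sum.inr b, by intro t ht; simp at ht⟩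

/-- The representative state `s_{(R_i,B_i)}` of the `i`-th collapsed EC. -/
def repV (R : Fin n → Finset S) (i : Fin n) : CSv R :=
  ⟨Sum.inl (Sum.inr i), by intro t ht; simp at ht⟩

/-- The available actions `A^c` of the collapsed MDP. -/
noncomputable def cAct (M : MDP S A) (R : Fin n → Finset S) (B : Fin n → Finset A) :
    CSv R → Finset (CA A n) := fun x =>
  match x.1 with
  | Sum.inl (Sum.inl s) => (M.act s).image fun a => Sum.inl (Sum.inl a)
  | Sum.inl (Sum.inr i) =>
      insert (Sum.inl (Sum.inr i))
        (((R i).biUnion M.act \ B i).image fun a => Sum.inl (Sum.inl a))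
  | Sum.inr b => {Sum.inr b}

/-- The transition function `Δ^c` of the collapsed MDP: an original action keeps
its distribution (aggregated over the represented states), `rem_i` moves to `s₊`
or `s₋` according to whether the `i`-th EC contains a target state, and `a₊`, `a₋`
are self-loops. -/
noncomputable def cP (M : MDP S A) (R : Fin n → Finset S) (T : Finset S) :
    CSv R → CA A n → CSv R → ℝ := fun _x a y =>
  match a with
  | Sum.inl (Sum.inl a₀) => ∑ s' ∈ statesOf R y.1, M.P (M.stOf a₀) a₀ s'
  | Sum.inl (Sum.inr i) =>
      if (R i ∩ T).Nonempty then (if y = term R true then 1 else 0)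
      else (if y = term R false then 1 else 0)
  | Sum.inr b => if y = term R b then 1 else 0


lemma mem_statesOf_collapseV (R : Fin n → Finset S) (s : S) :
    s ∈ statesOf R (collapseV R s).1 := by
  unfold collapseV
  split_ifs with h
  · exact Classical.choose_spec h
  · exact Finset.mem_singleton_self s

lemma collapseV_eq_repV (R : Fin n → Finset S)
    (hdisj : ∀ i j, i ≠ j → Disjoint (R i) (R j))
    {s : S} {i : Fin n} (hs : s ∈ R i) : collapseV R s = repV R i := by
  have h : ∃ j, s ∈ R j := ⟨i, hs⟩
  have hc : Classical.choose h = i := by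
    by_contra hne
    exact (Finset.disjoint_left.mp (hdisj _ _ hne) (Classical.choose_spec h)) hs
  unfold collapseV
  rw [dif_pos h]
  refine Subtype.ext ?_
  show (Sum.inl (Sum.inr (Classical.choose h)) : CS S n) = Sum.inl (Sum.inr i)
  rw [hc]

lemma collapseV_eq_self (R : Fin n → Finset S) {s : S} (h : ¬ ∃ i, s ∈ R i) :
    (collapseV R s).1 = Sum.inl (Sum.inl s) := by
  unfold collapseV
  rw [dif_neg h]

lemma cAct_eq_of_inl (M : MDP S A) (R : Fin n → Finset S) (B : Fin n → Finset A)
    (x : CSv R) (s : S) (hx : x.1 = Sum.inl (Sum.inl s)) :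
    cAct M R B x = (M.act s).image (fun a => Sum.inl (Sum.inl a)) := by
  obtain ⟨v, hv⟩ := x
  simp only at hx
  subst hx
  rfl

lemma good_step (M : MDP S A) (R : Fin n → Finset S) (B : Fin n → Finset A)
    (hdisj : ∀ i j, i ≠ j → Disjoint (R i) (R j)) (T : Finset S)
    {s t : S} {a : A} (ha : a ∈ M.act s) (hP : 0 < M.P s a t)
    (hgood : ¬ ∃ i, s ∈ R i ∧ a ∈ B i) :
    (Sum.inl (Sum.inl a) ∈ cAct M R B (collapseV R s)) ∧
    0 < cP M R T (collapseV R s) (Sum.inl (Sum.inl a)) (collapseV R t) := by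
  constructor
  · by_cases h : ∃ i, s ∈ R i
    · obtain ⟨i, hi⟩ := h
      rw [collapseV_eq_repV R hdisj hi]
      show Sum.inl (Sum.inl a) ∈ insert (Sum.inl (Sum.inr i))
        ((((R i).biUnion M.act) \ B i).image fun a => Sum.inl (Sum.inl a))
      refine Finset.mem_insert_of_mem ?_
      refine Finset.mem_image.mpr ⟨a, ?_, rfl⟩
      exact Finset.mem_sdiff.mpr
        ⟨Finset.mem_biUnion.mpr ⟨s, hi, ha⟩, fun hb => hgood ⟨i, hi, hb⟩⟩
    · rw [cAct_eq_of_inl M R B _ s (collapseV_eq_self R h)]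
      exact Finset.mem_image.mpr ⟨a, ha, rfl⟩
  · show 0 < ∑ s' ∈ statesOf R (collapseV R t).1, M.P (M.stOf a) a s'
    rw [M.stOf_spec s a ha]
    exact Finset.sum_pos' (fun s' _ => M.P_nonneg s a s')
      ⟨t, mem_statesOf_collapseV R t, hP⟩

/-- Lifting paths of `M` to paths of the collapsed MDP `M^c`. -/
theorem path_normal_to_collapsed (M : MDP S A) (n : ℕ) (R : Fin n → Finset S) (B : Fin n → Finset A)
    (hEC : ∀ i, IsEC M.act M.P (R i) (B i))
    (hdisj : ∀ i j, i ≠ j → Disjoint (R i) (R j))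
    (T : Finset S)
    (Mc : MDP (CSv R) (CA A n))
    (Hact : ∀ x, Mc.act x = cAct M R B x)
    (HP : ∀ x a y, Mc.P x a y = cP M R T x a y)
    (N : ℕ) (st : ℕ → S) (ac : ℕ → A)
    (hpath : IsPath M.act M.P N st ac) :
    ∃ (m : ℕ) (idx : ℕ → ℕ),
      m ≤ N ∧
      (∀ j, j < m → idx j < idx (j + 1)) ∧
      (∀ j, j ≤ m → idx j ≤ N) ∧
      (∀ j, j < m → idx j < N) ∧
      IsPath Mc.act Mc.P m (fun j => collapseV R (st (idx j)))
        (fun j => Sum.inl (Sum.inl (ac (idx j)))) ∧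
      collapseV R (st 0) = collapseV R (st (idx 0)) ∧
      collapseV R (st N) = collapseV R (st (idx m)) := by
  induction N with
  | zero =>
    refine ⟨0, fun _ => 0, le_refl _, ?_, ?_, ?_, ?_, rfl, rfl⟩
    · intro j hj; exact absurd hj (Nat.not_lt_zero j)
    · intro j hj; exact le_refl 0
    · intro j hj; exact absurd hj (Nat.not_lt_zero j)
    · intro k hk; exact absurd hk (Nat.not_lt_zero k)
  | succ N IH =>
    obtain ⟨m, idx, hm, hinc, hle, hlt, hpc, h0, hN⟩ :=
      IH (fun k hk => hpath k (Nat.lt_succ_of_lt hk))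
    have hstep := hpath N (Nat.lt_succ_self N)
    by_cases hbad : ∃ i, st N ∈ R i ∧ ac N ∈ B i
    · obtain ⟨i, hsi, hai⟩ := hbad
      have hmem : st (N + 1) ∈ R i :=
        (hEC i).2.2.2.1 _ hsi _ hai hstep.1 _ hstep.2
      refine ⟨m, idx, le_trans hm (Nat.le_succ N), hinc,
        fun j hj => le_trans (hle j hj) (Nat.le_succ N),
        fun j hj => lt_trans (hlt j hj) (Nat.lt_succ_self N), hpc, h0, ?_⟩
      calc collapseV R (st (N + 1)) = repV R i := collapseV_eq_repV R hdisj hmem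
        _ = collapseV R (st N) := (collapseV_eq_repV R hdisj hsi).symm
        _ = collapseV R (st (idx m)) := hN
    · have hg := good_step M R B hdisj T hstep.1 hstep.2 hbad
      set f : ℕ → ℕ := fun j => if j < m then idx j else if j = m then N else N + 1
        with hfdef
      have hf_lt : ∀ j, j < m → f j = idx j := fun j hj => if_pos hj
      have hf_m : f m = N := by simp [hfdef]
      have hf_gt : ∀ j, m < j → f j = N + 1 := by
        intro j hj
        rw [hfdef]
        simp only
        rw [if_neg (by omega), if_neg (by omega)]
      refine ⟨m + 1, f, Nat.succ_le_succ hm, ?_, ?_, ?_, ?_, ?_, ?_⟩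
      · intro j hj
        by_cases h1 : j + 1 < m
        · rw [hf_lt j (by omega), hf_lt (j + 1) h1]; exact hinc j (by omega)
        · by_cases h2 : j + 1 = m
          · rw [hf_lt j (by omega)]
            have e : f (j + 1) = N := by rw [h2, hf_m]
            rw [e]; exact hlt j (by omega)
          · have hj' : j = m := by omega
            rw [hj', hf_m, hf_gt (m + 1) (Nat.lt_succ_self m)]
            omega
      · intro j hj
        by_cases h1 : j < m
        · rw [hf_lt j h1]; have := hlt j h1; omega
        · by_cases h2 : j = m
          · rw [h2, hf_m]; omega
          · rw [hf_gt j (by omega)]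
      · intro j hj
        by_cases h1 : j < m
        · rw [hf_lt j h1]; have := hlt j h1; omega
        · have h2 : j = m := by omega
          rw [h2, hf_m]; omega
      · intro k hk
        dsimp only
        by_cases hkm : k < m
        · rw [hf_lt k hkm]
          by_cases hk1 : k + 1 < m
          · rw [hf_lt (k + 1) hk1]
            have h' := hpc k hkm
            dsimp only at h'
            exact h'
          · have hk2 : k + 1 = m := by omega
            have e : f (k + 1) = N := by rw [hk2, hf_m]
            rw [e, hN]
            have h' := hpc k hkm
            dsimp only at h'
            rw [hk2] at h'
            exact h'
        · have hk' : k = m := by omega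
          subst hk'
          rw [hf_m, hf_gt (k + 1) (Nat.lt_succ_self k)]
          rw [Hact, HP]
          exact hg
      · by_cases h1 : 0 < m
        · rw [hf_lt 0 h1]; exact h0
        · have h2 : m = 0 := by omega
          have e : f 0 = N := by rw [← h2, hf_m]
          rw [e]
          rw [h2] at hN
          exact h0.trans hN.symm
      · rw [hf_gt (m + 1) (Nat.lt_succ_self m)]
end

section
/- Let ϱ^c = s^c_1 a^c_1 s^c_2 … a^c_{m−1} s^c_m be a finite path in the collapsed MDP M^c not containing the special states s_+ and s_-. Then there exists a finite path ϱ = s_1 a_1 s_2 … a_{n−1} s_n in M with n ≥ m and indices 1 ≤ i_1 < i_2 < … < i_m ≤ n (setting i_{m+1} = n+1) such that (i) s_k ∈ states(s^c_j) whenever i_j ≤ k < i_{j+1}, and (ii) if s^c_j = s_{(R_i,B_i)} then a_k ∈ B_i whenever i_j ≤ k < i_{j+1} − 1. -/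
/-!
STATEMENT 2: Every finite path ϱ^c = s^c₁ a^c₁ … a^c_{m−1} s^c_m of the collapsed
MDP M^c avoiding s₊ and s₋ is the projection of a finite path of M: there is a path
ϱ = s₁ a₁ … a_{n−1} s_n of M with n ≥ m and indices i₁ < … < i_m (with
i_{m+1} = n+1) such that s_k ∈ states(s^c_j) whenever i_j ≤ k < i_{j+1}, and if
s^c_j is a representative state s_{(R_i,B_i)} then a_k ∈ B_i whenever
i_j ≤ k < i_{j+1} − 1.
-/

open Finset
open scoped Classical

variable {S A : Type} [Fintype S] [DecidableEq S] [Fintype A] [DecidableEq A] {n : ℕ}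

/-- Auxiliary: turn a `ReflTransGen (stepIn …)` into a concrete finite chain. -/
lemma chain_of_rtg {σ α : Type*} (act : σ → Finset α) (P : σ → α → σ → ℝ)
    (R : Finset σ) (Bs : Finset α) (a₀ : α) {s s' : σ}
    (h : Relation.ReflTransGen (stepIn act P R Bs) s s') (hs : s ∈ R) :
    ∃ (m : ℕ) (f : ℕ → σ) (g : ℕ → α), f 0 = s ∧ f m = s' ∧ (∀ t ≤ m, f t ∈ R) ∧
      ∀ t < m, g t ∈ Bs ∧ g t ∈ act (f t) ∧ 0 < P (f t) (g t) (f (t + 1)) := by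
  induction h with
  | refl =>
      exact ⟨0, fun _ => s, fun _ => a₀, rfl, rfl,
        fun t ht => by
          have : t = 0 := Nat.le_zero.mp ht
          subst this; exact hs,
        fun t ht => absurd ht (Nat.not_lt_zero t)⟩
  | @tail b c _ hstep ih =>
      obtain ⟨m, f, g, hf0, hfm, hfR, hsteps⟩ := ih
      obtain ⟨hbR, hcR, a, haB, haAct, haP⟩ := hstep
      refine ⟨m + 1, fun t => if t ≤ m then f t else c,
        fun t => if t < m then g t else a, by simp [hf0], by simp, ?_, ?_⟩
      · intro t ht
        by_cases h' : t ≤ m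
        · simpa [h'] using hfR t h'
        · simpa [h'] using hcR
      · intro t ht
        by_cases h' : t < m
        · have h1 : t ≤ m := Nat.le_of_lt h'
          have h2 : t + 1 ≤ m := h'
          simpa [h', h1, h2] using hsteps t h'
        · have htm : t = m := by omega
          simp only [htm, if_neg (by omega : ¬ m < m), if_pos (le_refl m),
            if_neg (by omega : ¬ m + 1 ≤ m)]
          rw [hfm]
          exact ⟨haB, haAct, haP⟩

/-- Auxiliary: a positive sum of nonnegative reals has a positive term. -/
lemma exists_pos_of_sum_pos {σ : Type*} (F : Finset σ) (h : σ → ℝ)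
    (hpos : 0 < ∑ x ∈ F, h x) (hnn : ∀ x, 0 ≤ h x) : ∃ x ∈ F, 0 < h x := by
  by_contra hc
  push_neg at hc
  have : ∑ x ∈ F, h x ≤ 0 := Finset.sum_nonpos fun x hx => hc x hx
  linarith

lemma cAct_eq_inl (M : MDP S A) (R : Fin n → Finset S) (B : Fin n → Finset A)
    {x : CSv R} {s : S} (h : x.1 = Sum.inl (Sum.inl s)) :
    cAct M R B x = (M.act s).image fun a => Sum.inl (Sum.inl a) := by
  unfold cAct
  rw [h]

lemma cAct_eq_inr (M : MDP S A) (R : Fin n → Finset S) (B : Fin n → Finset A)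
    {x : CSv R} {i : Fin n} (h : x.1 = Sum.inl (Sum.inr i)) :
    cAct M R B x =
      insert (Sum.inl (Sum.inr i))
        (((R i).biUnion M.act \ B i).image fun a => Sum.inl (Sum.inl a)) := by
  unfold cAct
  rw [h]

/-- Projecting paths of the collapsed MDP `M^c` to paths of `M`. -/
theorem path_collapsed_to_normal (M : MDP S A) (n : ℕ) (R : Fin n → Finset S) (B : Fin n → Finset A)
    (hEC : ∀ i, IsEC M.act M.P (R i) (B i))
    (hdisj : ∀ i j, i ≠ j → Disjoint (R i) (R j))
    (T : Finset S)
    (Mc : MDP (CSv R) (CA A n))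
    (Hact : ∀ x, Mc.act x = cAct M R B x)
    (HP : ∀ x a y, Mc.P x a y = cP M R T x a y)
    (L : ℕ) (cst : ℕ → CSv R) (cac : ℕ → CA A n)
    (hcpath : IsPath Mc.act Mc.P L cst cac)
    (hnoterm : ∀ j, j ≤ L → ∀ b : Bool, (cst j).1 ≠ Sum.inr b) :
    ∃ (N : ℕ) (st : ℕ → S) (ac : ℕ → A) (idx : ℕ → ℕ),
      L ≤ N ∧
      IsPath M.act M.P N st ac ∧
      (∀ j, j < L → idx j < idx (j + 1)) ∧
      (∀ j, j ≤ L → idx j ≤ N) ∧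
      (∀ j, j ≤ L → ∀ k, idx j ≤ k → k < (if j = L then N + 1 else idx (j + 1)) →
        st k ∈ statesOf R (cst j).1) ∧
      (∀ j, j ≤ L → ∀ i : Fin n, (cst j).1 = Sum.inl (Sum.inr i) →
        ∀ k, idx j ≤ k → k + 1 < (if j = L then N + 1 else idx (j + 1)) →
          ac k ∈ B i) := by
  revert hcpath hnoterm
  induction L with
  | zero =>
      intro hcpath hnoterm
      have h0 := hnoterm 0 le_rfl
      obtain ⟨s₀, hs₀⟩ : ∃ s₀, s₀ ∈ statesOf R (cst 0).1 := by
        rcases hL : (cst 0).1 with ((s | i) | b)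
        · exact ⟨s, by simp [statesOf]⟩
        · obtain ⟨s, hs⟩ := (hEC i).1
          exact ⟨s, by simpa [statesOf] using hs⟩
        · exact absurd hL (h0 b)
      obtain ⟨a₀, _⟩ := M.act_ne s₀
      refine ⟨0, fun _ => s₀, fun _ => a₀, fun _ => 0, le_rfl, ?_, ?_, ?_, ?_, ?_⟩
      · intro k hk; exact absurd hk (Nat.not_lt_zero k)
      · intro j hj; omega
      · intro j hj; exact le_rfl
      · intro j hj k hk1 hk2
        have hj0 : j = 0 := Nat.le_zero.mp hj
        subst hj0
        exact hs₀
      · intro j hj i hi k hk1 hk2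
        have hj0 : j = 0 := Nat.le_zero.mp hj
        subst hj0
        have hk2' : k + 1 < 1 := by simpa using hk2
        omega
  | succ L IH =>
      intro hcpath hnoterm
      obtain ⟨N, st, ac, idx, hLN, hpath, hmono, hidxN, hstates, hacts⟩ :=
        IH (fun k hk => hcpath k (by omega)) (fun j hj b => hnoterm j (by omega) b)
      obtain ⟨hactL, hPL⟩ := hcpath L (by omega)
      rw [Hact] at hactL
      rw [HP] at hPL
      have hstN : st N ∈ statesOf R (cst L).1 := by
        exact hstates L le_rfl N (hidxN L le_rfl) (by simp)
      obtain ⟨a₀, hcacL, m, f, g, hf0, hfm, ha₀fm, hfmem, hgstep⟩ :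
          ∃ (a₀ : A), cac L = Sum.inl (Sum.inl a₀) ∧
          ∃ (m : ℕ) (f : ℕ → S) (g : ℕ → A),
            f 0 = st N ∧ f m = M.stOf a₀ ∧ a₀ ∈ M.act (f m) ∧
            (∀ t ≤ m, f t ∈ statesOf R (cst L).1) ∧
            (∀ t < m, g t ∈ M.act (f t) ∧ 0 < M.P (f t) (g t) (f (t + 1)) ∧
              ∀ i : Fin n, (cst L).1 = Sum.inl (Sum.inr i) → g t ∈ B i) := by
        rcases hL : (cst L).1 with ((s | i) | b)
        · -- singleton state
          rw [cAct_eq_inl M R B hL] at hactL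
          obtain ⟨a₀, ha₀, heq⟩ := Finset.mem_image.mp hactL
          have hst : M.stOf a₀ = s := M.stOf_spec s a₀ ha₀
          have hstN' : st N = s := by
            rw [hL] at hstN
            simpa [statesOf] using hstN
          refine ⟨a₀, heq.symm, 0, fun _ => st N, fun _ => a₀, rfl,
            by rw [hstN', hst], by rw [hstN']; exact ha₀, ?_, ?_⟩
          · intro t ht
            simp [statesOf, hstN']
          · intro t ht; exact absurd ht (Nat.not_lt_zero t)
        · -- representative state
          rw [cAct_eq_inr M R B hL] at hactL
          rcases Finset.mem_insert.mp hactL with hrem | himg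
          · exfalso
            rw [hrem] at hPL
            simp only [cP] at hPL
            by_cases hT : (R i ∩ T).Nonempty
            · rw [if_pos hT] at hPL
              have hterm : cst (L + 1) = term R true := by
                by_contra hne
                rw [if_neg hne] at hPL
                linarith
              exact hnoterm (L + 1) le_rfl true (by rw [hterm]; rfl)
            · rw [if_neg hT] at hPL
              have hterm : cst (L + 1) = term R false := by
                by_contra hne
                rw [if_neg hne] at hPL
                linarith
              exact hnoterm (L + 1) le_rfl false (by rw [hterm]; rfl)
          · obtain ⟨a₀, ha₀, heq⟩ := Finset.mem_image.mp himg
            obtain ⟨ha₀U, ha₀B⟩ := Finset.mem_sdiff.mp ha₀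
            obtain ⟨s₀, hs₀R, hs₀act⟩ := Finset.mem_biUnion.mp ha₀U
            have hst : M.stOf a₀ = s₀ := M.stOf_spec s₀ a₀ hs₀act
            have hstNR : st N ∈ R i := by
              rw [hL] at hstN
              simpa [statesOf] using hstN
            have hrtg := (hEC i).2.2.2.2 (st N) hstNR s₀ hs₀R
            obtain ⟨m, f, g, hf0, hfm, hfR, hgs⟩ :=
              chain_of_rtg M.act M.P (R i) (B i) a₀ hrtg hstNR
            refine ⟨a₀, heq.symm, m, f, g, hf0, by rw [hfm, hst],
              by rw [hfm]; exact hs₀act, ?_, ?_⟩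
            · intro t ht
              simpa [statesOf] using hfR t ht
            · intro t ht
              obtain ⟨hgB, hgact, hgP⟩ := hgs t ht
              refine ⟨hgact, hgP, ?_⟩
              intro i' hi'
              have : i = i' := by simpa using hi'
              subst this
              exact hgB
        · exact absurd hL (hnoterm L (by omega) b)
      rw [hcacL] at hPL
      simp only [cP] at hPL
      obtain ⟨s', hs'mem, hs'P⟩ :=
        exists_pos_of_sum_pos _ _ hPL (fun x => M.P_nonneg _ _ x)
      refine ⟨N + m + 1,
        (fun k => if k ≤ N then st k else if k ≤ N + m then f (k - N) else s'),
        (fun k => if k < N then ac k else if k < N + m then g (k - N) else a₀),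
        (fun j => if j ≤ L then idx j else N + m + 1),
        by omega, ?_, ?_, ?_, ?_, ?_⟩
      · -- IsPath
        intro k hk
        by_cases hk1 : k < N
        · have h1 : k ≤ N := by omega
          have h2 : k + 1 ≤ N := by omega
          simp only [if_pos h1, if_pos h2, if_pos hk1]
          exact hpath k hk1
        · by_cases hk2 : k < N + m
          · have hfk : (if k ≤ N then st k else if k ≤ N + m then f (k - N) else s')
                = f (k - N) := by
              by_cases h : k ≤ N
              · have hkN : k = N := by omega
                subst hkN
                simp [hf0]
              · rw [if_neg h, if_pos (by omega : k ≤ N + m)]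
            have hfk1 : (if k + 1 ≤ N then st (k + 1)
                else if k + 1 ≤ N + m then f (k + 1 - N) else s') = f (k - N + 1) := by
              rw [if_neg (by omega : ¬ k + 1 ≤ N), if_pos (by omega : k + 1 ≤ N + m)]
              congr 1
              omega
            simp only [if_neg hk1, if_pos hk2, hfk, hfk1]
            obtain ⟨h1, h2, _⟩ := hgstep (k - N) (by omega)
            exact ⟨h1, h2⟩
          · have hk3 : k = N + m := by omega
            subst hk3
            have hfk : (if N + m ≤ N then st (N + m)
                else if N + m ≤ N + m then f (N + m - N) else s') = f m := by
              by_cases h : N + m ≤ N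
              · have hm0 : m = 0 := by omega
                subst hm0
                simpa using hf0.symm
              · rw [if_neg h, if_pos le_rfl]
                congr 1
                omega
            have hfk1 : (if N + m + 1 ≤ N then st (N + m + 1)
                else if N + m + 1 ≤ N + m then f (N + m + 1 - N) else s') = s' := by
              rw [if_neg (by omega : ¬ N + m + 1 ≤ N),
                if_neg (by omega : ¬ N + m + 1 ≤ N + m)]
            simp only [if_neg hk1, if_neg hk2, hfk, hfk1]
            refine ⟨ha₀fm, ?_⟩
            rw [hfm]
            exact hs'P
      · -- monotone
        intro j hj
        by_cases h : j < L
        · have h1 : j ≤ L := by omega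
          have h2 : j + 1 ≤ L := by omega
          simp only [if_pos h1, if_pos h2]
          exact hmono j h
        · have hjL : j = L := by omega
          simp only [hjL, if_pos le_rfl, if_neg (by omega : ¬ L + 1 ≤ L)]
          have := hidxN L le_rfl
          omega
      · -- bound
        intro j hj
        by_cases h : j ≤ L
        · simp only [if_pos h]
          have := hidxN j h
          omega
        · simp only [if_neg h]
          omega
      · -- states
        intro j hj k hk1 hk2
        by_cases hjL : j ≤ L
        · rw [if_neg (by omega : ¬ j = L + 1)] at hk2
          simp only [if_pos hjL] at hk1
          by_cases hjL2 : j < L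
          · simp only [if_pos (by omega : j + 1 ≤ L)] at hk2
            have hkN : k ≤ N := by
              have := hidxN (j + 1) (by omega)
              omega
            simp only [if_pos hkN]
            exact hstates j hjL k hk1 (by rw [if_neg (by omega : ¬ j = L)]; exact hk2)
          · have hjL' : L = j := by omega
            subst hjL'
            simp only [if_neg (by omega : ¬ L + 1 ≤ L)] at hk2
            by_cases hkN : k ≤ N
            · simp only [if_pos hkN]
              exact hstates L le_rfl k hk1 (by rw [if_pos rfl]; omega)
            · simp only [if_neg hkN, if_pos (by omega : k ≤ N + m)]
              exact hfmem (k - N) (by omega)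
        · have hj' : j = L + 1 := by omega
          subst hj'
          rw [if_pos rfl] at hk2
          simp only [if_neg (by omega : ¬ L + 1 ≤ L)] at hk1
          have hkk : k = N + m + 1 := by omega
          subst hkk
          simp only [if_neg (by omega : ¬ N + m + 1 ≤ N),
            if_neg (by omega : ¬ N + m + 1 ≤ N + m)]
          exact hs'mem
      · -- actions
        intro j hj i hi k hk1 hk2
        by_cases hjL : j ≤ L
        · rw [if_neg (by omega : ¬ j = L + 1)] at hk2
          simp only [if_pos hjL] at hk1
          by_cases hjL2 : j < L
          · simp only [if_pos (by omega : j + 1 ≤ L)] at hk2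
            have hkN : k < N := by
              have := hidxN (j + 1) (by omega)
              omega
            simp only [if_pos hkN]
            exact hacts j hjL i hi k hk1 (by rw [if_neg (by omega : ¬ j = L)]; exact hk2)
          · have hjL' : L = j := by omega
            subst hjL'
            simp only [if_neg (by omega : ¬ L + 1 ≤ L)] at hk2
            by_cases hkN : k < N
            · simp only [if_pos hkN]
              exact hacts L le_rfl i hi k hk1 (by rw [if_pos rfl]; omega)
            · simp only [if_neg hkN, if_pos (by omega : k < N + m)]
              exact (hgstep (k - N) (by omega)).2.2 i hi
        · have hj' : j = L + 1 := by omega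
          subst hj'
          rw [if_pos rfl] at hk2
          simp only [if_neg (by omega : ¬ L + 1 ≤ L)] at hk1
          omega
end

section
/- Let M^c = collapse(M, MECs(M), ŝ, T) be the collapsed MDP of M where the collapsed set of ECs consists of all maximal end components of M. Then the only maximal end components of M^c are ({s_+}, {a_+}) and ({s_-}, {a_-}); in particular M^c has no end component other than the two trivial terminal ones. -/
/-!
An end component of the collapsed MDP containing `s₊` or `s₋` is trivial, as these states are
absorbing. Any other end component uses only original actions (a `rem_i` leads to `s₊` or `s₋`),
and expanding each representative `s_{(R_i,B_i)}` back into `(R_i, B_i)` turns it into an end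
component of `M`. That lift lies in some MEC `(R_i, B_i)`; disjointness of the MECs forces the
collapsed component to live at `s_{(R_i,B_i)}`, whose original actions all avoid `B_i`, while
maximality of `(R_i, B_i)` puts every action of the lift into `B_i`.
-/

open Finset
open scoped Classical

variable {S A : Type} [Fintype S] [DecidableEq S] [Fintype A] [DecidableEq A] {n : ℕ}

open Relation

lemma Relation.ReflTransGen.lift_fibers {β γ : Type*} {r : β → β → Prop}
    {r' : γ → γ → Prop} {p : β → Prop} (F : β → Set γ)
    (hfib : ∀ x, p x → ∀ u ∈ F x, ∀ v ∈ F x, ReflTransGen r' u v)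
    (hstep : ∀ x y, r x y → p y ∧ ∃ u ∈ F x, ∃ v ∈ F y, r' u v)
    {x y : β} (hx : p x) (h : ReflTransGen r x y) :
    ∀ u ∈ F x, ∀ v ∈ F y, ReflTransGen r' u v := by
  induction h with
  | refl => exact hfib x hx
  | tail _ hbc ih =>
    obtain ⟨hc, u', hu', v', hv', huv'⟩ := hstep _ _ hbc
    exact fun u hu v hv => ((ih u hu u' hu').tail huv').trans (hfib _ hc v' hv' v hv)

section EndComponent

variable {σ α : Type*} {act : σ → Finset α} {P : σ → α → σ → ℝ}

lemma stepIn_mono {R R' : Finset σ} {B B' : Finset α} (hR : R ⊆ R') (hB : B ⊆ B') {x y : σ}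
    (h : stepIn act P R B x y) : stepIn act P R' B' x y := by
  obtain ⟨hx, hy, a, haB, haA, hP⟩ := h
  exact ⟨hR hx, hR hy, a, hB haB, haA, hP⟩

lemma IsEC.exists_isMEC_superset [Finite σ] [Finite α] {R : Finset σ} {B : Finset α}
    (h : IsEC act P R B) : ∃ R' B', IsMEC act P R' B' ∧ R ⊆ R' ∧ B ⊆ B' := by
  obtain ⟨⟨R', B'⟩, ⟨hR, hB⟩, hEC', hmax⟩ :=
    Finite.exists_le_maximal (α := Finset σ × Finset α) (p := fun q => IsEC act P q.1 q.2)
      (a := (R, B)) h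
  refine ⟨R', B', ⟨hEC', fun R'' B'' hEC'' hR' hB' => ?_⟩, hR, hB⟩
  obtain ⟨h₁, h₂⟩ := hmax (y := (R'', B'')) hEC'' ⟨hR', hB'⟩
  exact ⟨hR'.antisymm h₁, hB'.antisymm h₂⟩

def IsAbsorbing (act : σ → Finset α) (P : σ → α → σ → ℝ) (x : σ) (a : α) : Prop :=
  act x = {a} ∧ ∀ y, 0 < P x a y → y = x

namespace IsAbsorbing

variable {x : σ} {a : α}

lemma isEC_singleton (h : IsAbsorbing act P x a) : IsEC act P {x} {a} := by
  refine ⟨singleton_nonempty x, singleton_nonempty a, ?_, ?_, ?_⟩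
  · simp [h.1]
  · simp only [mem_singleton]
    rintro s rfl b rfl - y hy
    exact h.2 y hy
  · simp only [mem_singleton]
    rintro s rfl s' rfl
    rfl

lemma eq_of_isEC (h : IsAbsorbing act P x a) {R : Finset σ} {B : Finset α}
    (hEC : IsEC act P R B) (hx : x ∈ R) : R = {x} ∧ B = {a} := by
  have hR : R = {x} := by
    refine eq_singleton_iff_unique_mem.2 ⟨hx, fun y hy => ?_⟩
    have hxy := hEC.2.2.2.2 x hx y hy
    clear hy
    induction hxy with
    | refl => rfl
    | tail _ hstep ih =>
      obtain ⟨-, -, b, -, hb, hpos⟩ := hstep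
      subst ih
      rw [h.1, mem_singleton] at hb
      subst hb
      exact h.2 _ hpos
  have hB : ∀ b ∈ B, b = a := fun b hb => by
    obtain ⟨s, hs, hbs⟩ := hEC.2.2.1 b hb
    rw [hR, mem_singleton] at hs
    subst hs
    rwa [h.1, mem_singleton] at hbs
  obtain ⟨b, hb⟩ := hEC.2.1
  exact ⟨hR, eq_singleton_iff_unique_mem.2 ⟨hB b hb ▸ hb, hB⟩⟩

lemma isMEC_singleton (h : IsAbsorbing act P x a) : IsMEC act P {x} {a} :=
  ⟨h.isEC_singleton, fun _ _ hEC hR _ =>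
    (h.eq_of_isEC hEC (hR (mem_singleton_self x))).imp Eq.symm Eq.symm⟩

end IsAbsorbing

end EndComponent

section StatesOf

variable {S : Type} {R : Fin n → Finset S}

lemma exists_mem_statesOf (s : S) : ∃ y : CSv R, s ∈ statesOf R y.1 := by
  refine ⟨collapseV R s, ?_⟩
  unfold collapseV
  split_ifs with h
  · exact Classical.choose_spec h
  · exact mem_singleton_self s

lemma statesOf_nonempty (hR : ∀ i, (R i).Nonempty) {x : CSv R} (hx : ∀ b, x ≠ term R b) :
    (statesOf R x.1).Nonempty := by
  obtain ⟨(s | i) | b, hv⟩ := x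
  · exact singleton_nonempty s
  · exact hR i
  · exact absurd rfl (hx b)

lemma eq_repV_of_statesOf_subset (hdisj : ∀ i j, i ≠ j → Disjoint (R i) (R j))
    (hne : ∀ j, (R j).Nonempty) {x : CSv R} (hx : ∀ b, x ≠ term R b) {i : Fin n}
    (hsub : statesOf R x.1 ⊆ R i) : x = repV R i := by
  obtain ⟨(s | j) | b, hv⟩ := x
  · exact absurd (hsub (mem_singleton_self s)) (hv s rfl i)
  · obtain rfl : j = i := by
      by_contra hji
      obtain ⟨t, ht⟩ := hne j
      exact disjoint_left.1 (hdisj j i hji) ht (hsub ht)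
    rfl
  · exact absurd rfl (hx b)

end StatesOf

section Lift

variable {S A : Type} [Fintype A] [DecidableEq A] {R : Fin n → Finset S}
  {B : Fin n → Finset A} {Rc : Finset (CSv R)} {Bc : Finset (CA A n)}

def actionsOf (B : Fin n → Finset A) : CS S n → Finset A
  | Sum.inl (Sum.inr i) => B i
  | _ => ∅

/-- Expansion of a sub-MDP `(Rc, Bc)` of the collapsed MDP back to `M`. The internal actions
`B i` of a collapsed EC are not actions of the collapsed MDP and are restored explicitly. -/
def liftStates [DecidableEq S] (Rc : Finset (CSv R)) : Finset S :=
  Rc.biUnion fun x => statesOf R x.1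

def liftActions (B : Fin n → Finset A) (Rc : Finset (CSv R)) (Bc : Finset (CA A n)) :
    Finset A :=
  univ.filter (fun a => Sum.inl (Sum.inl a) ∈ Bc) ∪ Rc.biUnion fun x => actionsOf B x.1

lemma mem_liftStates [DecidableEq S] {s : S} :
    s ∈ liftStates Rc ↔ ∃ x ∈ Rc, s ∈ statesOf R x.1 :=
  mem_biUnion

lemma mem_liftActions {a : A} :
    a ∈ liftActions B Rc Bc ↔
      Sum.inl (Sum.inl a) ∈ Bc ∨ ∃ x ∈ Rc, a ∈ actionsOf B x.1 := by
  simp [liftActions]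

lemma statesOf_subset_liftStates [DecidableEq S] {x : CSv R} (hx : x ∈ Rc) :
    statesOf R x.1 ⊆ liftStates Rc :=
  fun _ hs => mem_liftStates.2 ⟨x, hx, hs⟩

lemma actionsOf_subset_liftActions {x : CSv R} (hx : x ∈ Rc) :
    actionsOf B x.1 ⊆ liftActions B Rc Bc :=
  fun _ ha => mem_liftActions.2 (Or.inr ⟨x, hx, ha⟩)

end Lift

section Collapse

variable {M : MDP S A} {R : Fin n → Finset S} {B : Fin n → Finset A} {T : Finset S}

lemma isAbsorbing_term (b : Bool) :
    IsAbsorbing (cAct M R B) (cP M R T) (term R b) (Sum.inr b) :=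
  ⟨rfl, fun y hy => by_contra fun hne => by simp [cP, hne] at hy⟩

lemma eq_repV_of_rem_mem_cAct {x : CSv R} {i : Fin n}
    (h : (Sum.inl (Sum.inr i) : CA A n) ∈ cAct M R B x) : x = repV R i := by
  obtain ⟨(s | j) | b, hv⟩ := x <;> simp [cAct] at h
  subst h
  rfl

lemma exists_cP_rem_pos (x : CSv R) (i : Fin n) :
    ∃ b, 0 < cP M R T x (Sum.inl (Sum.inr i)) (term R b) :=
  ⟨decide (R i ∩ T).Nonempty, by by_cases h : (R i ∩ T).Nonempty <;> simp [cP, h]⟩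

lemma eq_term_of_inr_mem_cAct {x : CSv R} {b : Bool}
    (h : (Sum.inr b : CA A n) ∈ cAct M R B x) : x = term R b := by
  obtain ⟨(s | j) | b', hv⟩ := x <;> simp [cAct] at h
  subst h
  rfl

lemma exists_mem_statesOf_of_mem_cAct {x : CSv R} {a : A}
    (h : Sum.inl (Sum.inl a) ∈ cAct M R B x) : ∃ s ∈ statesOf R x.1, a ∈ M.act s := by
  obtain ⟨(s | j) | b, hv⟩ := x <;> simp [cAct] at h
  · exact ⟨s, mem_singleton_self s, h⟩
  · obtain ⟨⟨s, hs, has⟩, -⟩ := h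
    exact ⟨s, hs, has⟩

lemma notMem_of_mem_cAct_repV {i : Fin n} {a : A}
    (h : Sum.inl (Sum.inl a) ∈ cAct M R B (repV R i)) : a ∉ B i := by
  simp only [cAct, repV, mem_insert, mem_image, mem_sdiff] at h
  aesop

lemma cP_inl_inl_pos_iff {x y : CSv R} {a : A} :
    0 < cP M R T x (Sum.inl (Sum.inl a)) y ↔ ∃ t ∈ statesOf R y.1, 0 < M.P (M.stOf a) a t :=
  sum_pos_iff_of_nonneg fun _ _ => M.P_nonneg _ _ _

variable {Rc : Finset (CSv R)} {Bc : Finset (CA A n)}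

lemma reflTransGen_of_mem_statesOf (hECi : ∀ i, IsEC M.act M.P (R i) (B i))
    {x : CSv R} (hx : x ∈ Rc) :
    ∀ u ∈ statesOf R x.1, ∀ v ∈ statesOf R x.1,
      ReflTransGen (stepIn M.act M.P (liftStates Rc) (liftActions B Rc Bc)) u v := by
  obtain ⟨(s | i) | b, hv⟩ := x
  · simp only [statesOf, mem_singleton]
    rintro u rfl v rfl
    rfl
  · exact fun u hu v hv => ReflTransGen.mono (fun _ _ =>
      stepIn_mono (statesOf_subset_liftStates hx) (actionsOf_subset_liftActions hx))
      _ _ ((hECi i).2.2.2.2 u hu v hv)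
  · simp [statesOf]

lemma exists_stepIn_of_stepIn_cP (hBc : ∀ a ∈ Bc, ∃ a₀, a = Sum.inl (Sum.inl a₀))
    {x y : CSv R} (h : stepIn (cAct M R B) (cP M R T) Rc Bc x y) :
    ∃ u ∈ statesOf R x.1, ∃ v ∈ statesOf R y.1,
      stepIn M.act M.P (liftStates Rc) (liftActions B Rc Bc) u v := by
  obtain ⟨hx, hy, a, haBc, hxa, hpos⟩ := h
  obtain ⟨a, rfl⟩ := hBc a haBc
  obtain ⟨u, hu, hua⟩ := exists_mem_statesOf_of_mem_cAct hxa
  obtain ⟨v, hv, huv⟩ := cP_inl_inl_pos_iff.1 hpos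
  rw [M.stOf_spec u a hua] at huv
  exact ⟨u, hu, v, hv, statesOf_subset_liftStates hx hu, statesOf_subset_liftStates hy hv, a,
    mem_liftActions.2 (Or.inl haBc), hua, huv⟩

namespace IsEC

lemma exists_eq_inl_inl (hEC : IsEC (cAct M R B) (cP M R T) Rc Bc)
    (hterm : ∀ b, term R b ∉ Rc) {a : CA A n} (ha : a ∈ Bc) :
    ∃ a₀, a = Sum.inl (Sum.inl a₀) := by
  obtain ⟨x, hx, hxa⟩ := hEC.2.2.1 a ha
  rcases a with (a₀ | i) | b
  · exact ⟨a₀, rfl⟩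
  · obtain rfl := eq_repV_of_rem_mem_cAct hxa
    obtain ⟨b, hpos⟩ := exists_cP_rem_pos (M := M) (T := T) (repV R i) i
    exact absurd (hEC.2.2.2.1 _ hx _ ha hxa _ hpos) (hterm b)
  · exact absurd (eq_term_of_inr_mem_cAct hxa ▸ hx) (hterm b)

lemma exists_mem_liftStates_of_mem_liftActions (hEC : IsEC (cAct M R B) (cP M R T) Rc Bc)
    (hECi : ∀ i, IsEC M.act M.P (R i) (B i)) {a : A} (ha : a ∈ liftActions B Rc Bc) :
    ∃ s ∈ liftStates Rc, a ∈ M.act s := by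
  rcases mem_liftActions.1 ha with haBc | ⟨⟨(t | i) | b, hv⟩, hx, hax⟩
  · obtain ⟨x, hx, hxa⟩ := hEC.2.2.1 _ haBc
    obtain ⟨s, hs, has⟩ := exists_mem_statesOf_of_mem_cAct hxa
    exact ⟨s, statesOf_subset_liftStates hx hs, has⟩
  · simp [actionsOf] at hax
  · obtain ⟨s, hs, has⟩ := (hECi i).2.2.1 a hax
    exact ⟨s, statesOf_subset_liftStates hx hs, has⟩
  · simp [actionsOf] at hax

lemma mem_liftStates_of_pos (hEC : IsEC (cAct M R B) (cP M R T) Rc Bc)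
    (hECi : ∀ i, IsEC M.act M.P (R i) (B i)) {s s' : S} {a : A}
    (ha : a ∈ liftActions B Rc Bc) (has : a ∈ M.act s) (hpos : 0 < M.P s a s') :
    s' ∈ liftStates Rc := by
  rcases mem_liftActions.1 ha with haBc | ⟨⟨(t | i) | b, hv⟩, hx, hax⟩
  · obtain ⟨x, hx, hxa⟩ := hEC.2.2.1 _ haBc
    obtain ⟨y, hy⟩ := exists_mem_statesOf (R := R) s'
    have hxy : 0 < cP M R T x (Sum.inl (Sum.inl a)) y :=
      cP_inl_inl_pos_iff.2 ⟨s', hy, M.stOf_spec s a has ▸ hpos⟩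
    exact statesOf_subset_liftStates (hEC.2.2.2.1 x hx _ haBc hxa y hxy) hy
  · simp [actionsOf] at hax
  · obtain ⟨t, ht, hat⟩ := (hECi i).2.2.1 a hax
    obtain rfl : s = t := (M.stOf_spec s a has).symm.trans (M.stOf_spec t a hat)
    exact statesOf_subset_liftStates hx ((hECi i).2.2.2.1 s ht a hax has s' hpos)
  · simp [actionsOf] at hax

lemma lift (hEC : IsEC (cAct M R B) (cP M R T) Rc Bc)
    (hECi : ∀ i, IsEC M.act M.P (R i) (B i)) (hterm : ∀ b, term R b ∉ Rc) :
    IsEC M.act M.P (liftStates Rc) (liftActions B Rc Bc) := by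
  refine ⟨?_, ?_, fun a ha => hEC.exists_mem_liftStates_of_mem_liftActions hECi ha,
    fun s _ a ha has s' => hEC.mem_liftStates_of_pos hECi ha has, ?_⟩
  · obtain ⟨x, hx⟩ := hEC.1
    obtain ⟨s, hs⟩ := statesOf_nonempty (fun i => (hECi i).1) fun b h => hterm b (h ▸ hx)
    exact ⟨s, statesOf_subset_liftStates hx hs⟩
  · obtain ⟨a, ha⟩ := hEC.2.1
    obtain ⟨a, rfl⟩ := hEC.exists_eq_inl_inl hterm ha
    exact ⟨a, mem_liftActions.2 (Or.inl ha)⟩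
  · intro s hs s' hs'
    obtain ⟨x, hx, hsx⟩ := mem_liftStates.1 hs
    obtain ⟨y, hy, hsy⟩ := mem_liftStates.1 hs'
    have hBc : ∀ a ∈ Bc, ∃ a₀, a = Sum.inl (Sum.inl a₀) :=
      fun _ => hEC.exists_eq_inl_inl hterm
    exact (hEC.2.2.2.2 x hx y hy).lift_fibers (fun z => statesOf R z.1) (p := (· ∈ Rc))
      (fun z hz => reflTransGen_of_mem_statesOf hECi hz)
      (fun _ _ h => ⟨h.2.1, exists_stepIn_of_stepIn_cP hBc h⟩) hx s hsx s' hsy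

lemma exists_term_mem (hEC : IsEC (cAct M R B) (cP M R T) Rc Bc)
    (hMEC : ∀ i, IsMEC M.act M.P (R i) (B i)) (hdisj : ∀ i j, i ≠ j → Disjoint (R i) (R j))
    (hall : ∀ R₀ B₀, IsMEC M.act M.P R₀ B₀ → ∃ i, R i = R₀ ∧ B i = B₀) :
    ∃ b, term R b ∈ Rc := by
  by_contra! hterm
  have hECi i := (hMEC i).1
  have hlift := hEC.lift hECi hterm
  obtain ⟨_, _, hMm, hRsub, -⟩ := hlift.exists_isMEC_superset
  obtain ⟨i, rfl, rfl⟩ := hall _ _ hMm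
  obtain ⟨a, haBc⟩ := hEC.2.1
  obtain ⟨a, rfl⟩ := hEC.exists_eq_inl_inl hterm haBc
  obtain ⟨x, hx, hxa⟩ := hEC.2.2.1 _ haBc
  obtain rfl : x = repV R i := eq_repV_of_statesOf_subset hdisj (fun j => (hECi j).1)
    (fun b h => hterm b (h ▸ hx)) ((statesOf_subset_liftStates hx).trans hRsub)
  -- the lift contains `(R i, B i)`, so by maximality it equals it
  have hBi := ((hMEC i).2 _ _ hlift (statesOf_subset_liftStates hx)
    (actionsOf_subset_liftActions hx)).2
  exact notMem_of_mem_cAct_repV hxa (hBi ▸ mem_liftActions.2 (Or.inl haBc))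

lemma eq_term (hEC : IsEC (cAct M R B) (cP M R T) Rc Bc)
    (hMEC : ∀ i, IsMEC M.act M.P (R i) (B i)) (hdisj : ∀ i j, i ≠ j → Disjoint (R i) (R j))
    (hall : ∀ R₀ B₀, IsMEC M.act M.P R₀ B₀ → ∃ i, R i = R₀ ∧ B i = B₀) :
    ∃ b, Rc = {term R b} ∧ Bc = {Sum.inr b} := by
  obtain ⟨b, hb⟩ := hEC.exists_term_mem hMEC hdisj hall
  exact ⟨b, (isAbsorbing_term b).eq_of_isEC hEC hb⟩

end IsEC

end Collapse

/-- Collapsing all MECs yields an MDP whose only (maximal) end components are the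
two trivial terminal ones. -/
theorem collapse_all_mecs_no_ec (M : MDP S A) (n : ℕ)
    (R : Fin n → Finset S) (B : Fin n → Finset A)
    (hMEC : ∀ i, IsMEC M.act M.P (R i) (B i))
    (hdisj : ∀ i j, i ≠ j → Disjoint (R i) (R j))
    (hall : ∀ R₀ B₀, IsMEC M.act M.P R₀ B₀ → ∃ i, R i = R₀ ∧ B i = B₀)
    (T : Finset S)
    (Mc : MDP (CSv R) (CA A n))
    (Hact : ∀ x, Mc.act x = cAct M R B x)
    (HP : ∀ x a y, Mc.P x a y = cP M R T x a y) :
    (∀ (Rc : Finset (CSv R)) (Bc : Finset (CA A n)),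
      IsMEC Mc.act Mc.P Rc Bc ↔
        (Rc = {term R true} ∧ Bc = {Sum.inr true}) ∨
        (Rc = {term R false} ∧ Bc = {Sum.inr false})) ∧
    (∀ (Rc : Finset (CSv R)) (Bc : Finset (CA A n)),
      IsEC Mc.act Mc.P Rc Bc →
        (Rc = {term R true} ∧ Bc = {Sum.inr true}) ∨
        (Rc = {term R false} ∧ Bc = {Sum.inr false})) := by
  rw [show Mc.act = cAct M R B from funext Hact, show Mc.P = cP M R T from funext₃ HP]
  have hEC : ∀ Rc Bc, IsEC (cAct M R B) (cP M R T) Rc Bc →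
      (Rc = {term R true} ∧ Bc = {Sum.inr true}) ∨
        (Rc = {term R false} ∧ Bc = {Sum.inr false}) := by
    intro Rc Bc h
    obtain ⟨b, rfl, rfl⟩ := h.eq_term hMEC hdisj hall
    cases b <;> simp
  refine ⟨fun Rc Bc => ⟨fun h => hEC Rc Bc h.1, ?_⟩, hEC⟩
  rintro (⟨rfl, rfl⟩ | ⟨rfl, rfl⟩) <;> exact (isAbsorbing_term _).isMEC_singleton
end

section
/- For any finite Markov chain (S,δ), state s ∈ S, and target set T ⊆ S, either P_s[◇T] = 0 or P_s[◇^{≤|S|} T] ≥ δ_min^{|S|}, where δ_min = min{δ(s,s') : s ∈ S, δ(s,s') > 0} is the minimal positive transition probability. -/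
/-!
STATEMENT 8: For any finite Markov chain (S,δ), state s ∈ S, and target set T ⊆ S,
either P_s[◇T] = 0 or P_s[◇^{≤|S|} T] ≥ δ_min^{|S|}, where δ_min is the minimal
positive transition probability.
-/

open Finset
open scoped Classical

/-- A finite Markov chain: a transition function assigning to each state a
probability distribution over states. -/
structure MC (S : Type) [Fintype S] where
  P : S → S → ℝ
  P_nonneg : ∀ s s', 0 ≤ P s s'
  P_sum : ∀ s, ∑ s', P s s' = 1

variable {S : Type} [Fintype S] [DecidableEq S] [Nonempty S]

/-- Step-bounded reachability probability `P_s[◇^{≤N} T]`, defined recursively. -/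
noncomputable def reachN (M : MC S) (T : Set S) : ℕ → S → ℝ
  | 0, s => if s ∈ T then 1 else 0
  | N + 1, s => if s ∈ T then 1 else ∑ s', M.P s s' * reachN M T N s'

/-- Unbounded reachability probability `P_s[◇ T] = sup_N P_s[◇^{≤N} T]`. -/
noncomputable def reach (M : MC S) (T : Set S) (s : S) : ℝ :=
  ⨆ N, reachN M T N s

/-- The minimal positive transition probability of the chain. -/
noncomputable def dmin (M : MC S) : ℝ :=
  sInf {p : ℝ | ∃ s s', 0 < M.P s s' ∧ M.P s s' = p}

set_option linter.unusedSectionVars false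

lemma reachN_nonneg (M : MC S) (T : Set S) : ∀ N s, 0 ≤ reachN M T N s := by
  intro N
  induction N with
  | zero =>
    intro s
    simp only [reachN]
    split <;> norm_num
  | succ N ih =>
    intro s
    simp only [reachN]
    split
    · norm_num
    · exact Finset.sum_nonneg fun s' _ => mul_nonneg (M.P_nonneg _ _) (ih s')

lemma reachN_succ_pos_iff (M : MC S) (T : Set S) (N : ℕ) (s : S) :
    0 < reachN M T (N + 1) s ↔ s ∈ T ∨ ∃ s', 0 < M.P s s' ∧ 0 < reachN M T N s' := by
  simp only [reachN]
  split
  · next h => simp [h]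
  · next h =>
    simp only [h, false_or]
    constructor
    · intro hpos
      by_contra hc
      push_neg at hc
      have : ∑ s', M.P s s' * reachN M T N s' = 0 := by
        apply Finset.sum_eq_zero
        intro s' _
        rcases lt_or_eq_of_le (M.P_nonneg s s') with hp | hp
        · have := hc s' hp
          have h0 : reachN M T N s' = 0 :=
            le_antisymm this (reachN_nonneg M T N s')
          simp [h0]
        · simp [← hp]
      linarith
    · rintro ⟨s', hp, hr⟩
      have h1 : 0 < M.P s s' * reachN M T N s' := mul_pos hp hr
      have h2 : M.P s s' * reachN M T N s' ≤ ∑ t, M.P s t * reachN M T N t :=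
        Finset.single_le_sum (f := fun t => M.P s t * reachN M T N t)
          (fun t _ => mul_nonneg (M.P_nonneg _ _) (reachN_nonneg M T N t))
          (Finset.mem_univ s')
      linarith

lemma reachN_mono_succ (M : MC S) (T : Set S) : ∀ N s, reachN M T N s ≤ reachN M T (N + 1) s := by
  intro N
  induction N with
  | zero =>
    intro s
    simp only [reachN]
    split
    · exact le_refl 1
    · exact Finset.sum_nonneg fun s' _ => mul_nonneg (M.P_nonneg _ _) (reachN_nonneg M T 0 s')
  | succ N ih =>
    intro s
    simp only [reachN]
    split
    · exact le_refl 1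
    · exact Finset.sum_le_sum fun s' _ => mul_le_mul_of_nonneg_left (ih s') (M.P_nonneg _ _)

lemma reachN_mono (M : MC S) (T : Set S) {N K : ℕ} (h : N ≤ K) (s : S) :
    reachN M T N s ≤ reachN M T K s := by
  induction h with
  | refl => exact le_refl _
  | step h ih => exact le_trans ih (reachN_mono_succ M T _ s)

lemma reachN_le_one (M : MC S) (T : Set S) : ∀ N s, reachN M T N s ≤ 1 := by
  intro N
  induction N with
  | zero => intro s; simp only [reachN]; split <;> norm_num
  | succ N ih =>
    intro s
    simp only [reachN]
    split
    · exact le_refl 1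
    · calc ∑ s', M.P s s' * reachN M T N s' ≤ ∑ s', M.P s s' * 1 :=
            Finset.sum_le_sum fun s' _ => mul_le_mul_of_nonneg_left (ih s') (M.P_nonneg _ _)
        _ = 1 := by simp [M.P_sum s]

lemma dmin_set_finite (M : MC S) :
    {p : ℝ | ∃ s s', 0 < M.P s s' ∧ M.P s s' = p}.Finite := by
  apply Set.Finite.subset (Set.finite_range (fun q : S × S => M.P q.1 q.2))
  rintro p ⟨s, s', _, hp⟩
  exact ⟨(s, s'), hp⟩

lemma dmin_set_nonempty (M : MC S) :
    {p : ℝ | ∃ s s', 0 < M.P s s' ∧ M.P s s' = p}.Nonempty := by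
  obtain ⟨s⟩ := ‹Nonempty S›
  have hex : ∃ s', 0 < M.P s s' := by
    by_contra h
    push_neg at h
    have hz : ∀ s', M.P s s' = 0 := fun s' => le_antisymm (h s') (M.P_nonneg s s')
    have hsum := M.P_sum s
    simp [hz] at hsum
  obtain ⟨s', hs'⟩ := hex
  exact ⟨M.P s s', s, s', hs', rfl⟩

lemma dmin_mem (M : MC S) : ∃ s s', 0 < M.P s s' ∧ M.P s s' = dmin M :=
  (dmin_set_nonempty M).csInf_mem (dmin_set_finite M)

lemma dmin_pos (M : MC S) : 0 < dmin M := by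
  obtain ⟨s, s', h, he⟩ := dmin_mem M
  rw [← he]; exact h

lemma dmin_le_one (M : MC S) : dmin M ≤ 1 := by
  obtain ⟨s, s', h, he⟩ := dmin_mem M
  rw [← he, ← M.P_sum s]
  exact Finset.single_le_sum (fun t _ => M.P_nonneg s t) (Finset.mem_univ s')

lemma dmin_le (M : MC S) {s s' : S} (h : 0 < M.P s s') : dmin M ≤ M.P s s' :=
  csInf_le (dmin_set_finite M).bddBelow ⟨s, s', h, rfl⟩

lemma reachN_pos_bound (M : MC S) (T : Set S) :
    ∀ N s, 0 < reachN M T N s → dmin M ^ N ≤ reachN M T N s := by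
  intro N
  induction N with
  | zero =>
    intro s h
    simp only [reachN] at h ⊢
    split
    · norm_num
    · next hs => simp [hs] at h
  | succ N ih =>
    intro s h
    rcases (reachN_succ_pos_iff M T N s).mp h with hs | ⟨s', hp, hr⟩
    · simp only [reachN, if_pos hs]
      exact pow_le_one₀ (le_of_lt (dmin_pos M)) (dmin_le_one M)
    · simp only [reachN]
      split
      · exact pow_le_one₀ (le_of_lt (dmin_pos M)) (dmin_le_one M)
      · have h1 : dmin M ^ (N + 1) ≤ M.P s s' * reachN M T N s' := by
          rw [pow_succ, mul_comm]
          exact mul_le_mul (dmin_le M hp) (ih s' hr) (pow_nonneg (le_of_lt (dmin_pos M)) N)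
            (M.P_nonneg s s')
        have h2 : M.P s s' * reachN M T N s' ≤ ∑ t, M.P s t * reachN M T N t :=
          Finset.single_le_sum (f := fun t => M.P s t * reachN M T N t)
            (fun t _ => mul_nonneg (M.P_nonneg _ _) (reachN_nonneg M T N t))
            (Finset.mem_univ s')
        linarith

lemma reachN_pos_stab (M : MC S) (T : Set S) :
    ∀ N s, 0 < reachN M T N s → 0 < reachN M T (Fintype.card S) s := by
  set A : ℕ → Finset S := fun N => Finset.univ.filter (fun s => 0 < reachN M T N s) with hA
  have hmem : ∀ N s, s ∈ A N ↔ 0 < reachN M T N s := by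
    intro N s; simp [hA]
  have hmono : ∀ {i j : ℕ}, i ≤ j → A i ⊆ A j := by
    intro i j hij s hs
    rw [hmem] at hs ⊢
    exact lt_of_lt_of_le hs (reachN_mono M T hij s)
  have hdet : ∀ N K, A N = A K → A (N + 1) = A (K + 1) := by
    intro N K h
    have h' : ∀ t, 0 < reachN M T N t ↔ 0 < reachN M T K t := by
      intro t
      rw [← hmem, ← hmem, h]
    ext t
    rw [hmem, hmem, reachN_succ_pos_iff, reachN_succ_pos_iff]
    constructor
    · rintro (ht | ⟨s', hp, hr⟩)
      · exact Or.inl ht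
      · exact Or.inr ⟨s', hp, (h' s').mp hr⟩
    · rintro (ht | ⟨s', hp, hr⟩)
      · exact Or.inl ht
      · exact Or.inr ⟨s', hp, (h' s').mpr hr⟩
  have hstab : ∃ k ≤ Fintype.card S, A k = A (k + 1) := by
    by_contra h
    push_neg at h
    have hcard : ∀ n, n ≤ Fintype.card S + 1 → n ≤ (A n).card := by
      intro n
      induction n with
      | zero => intro _; exact Nat.zero_le _
      | succ n ih =>
        intro hn
        have hn' : n ≤ Fintype.card S := Nat.lt_succ_iff.mp hn
        have hss : A n ⊂ A (n + 1) :=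
          (Finset.ssubset_iff_subset_ne).mpr ⟨hmono (Nat.le_succ n), h n hn'⟩
        have := Finset.card_lt_card hss
        have := ih (le_trans hn' (Nat.le_succ _))
        omega
    have h1 := hcard (Fintype.card S + 1) le_rfl
    have h2 : (A (Fintype.card S + 1)).card ≤ Fintype.card S := by
      simpa using Finset.card_le_univ (A (Fintype.card S + 1))
    omega
  obtain ⟨k, hk, hfix⟩ := hstab
  have heq : ∀ m, A (k + m) = A k := by
    intro m
    induction m with
    | zero => rfl
    | succ m ih =>
      have := hdet _ _ ih
      rw [← Nat.add_assoc] at *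
      rw [this, ← hfix]
  intro N s hs
  rw [← hmem] at hs
  rw [← hmem]
  rcases le_or_gt N (Fintype.card S) with hle | hlt
  · exact hmono hle hs
  · have hN : A N = A k := by
      have : N = k + (N - k) := by omega
      rw [this]; exact heq _
    rw [hN] at hs
    exact hmono hk hs

/-- For any finite Markov chain, state `s`, and target set `T`, either the
reachability probability of `T` from `s` is `0`, or already within `|S|` steps the
reachability probability is at least `δ_min^{|S|}`. -/
theorem mc_minimum_reachability (M : MC S) (T : Set S) (s : S) :
    reach M T s = 0 ∨ dmin M ^ Fintype.card S ≤ reachN M T (Fintype.card S) s := by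
  by_cases hex : ∃ N, 0 < reachN M T N s
  · obtain ⟨N, hN⟩ := hex
    exact Or.inr (reachN_pos_bound M T _ s (reachN_pos_stab M T N s hN))
  · left
    push_neg at hex
    have hall : ∀ N, reachN M T N s = 0 := fun N =>
      le_antisymm (hex N) (reachN_nonneg M T N s)
    calc reach M T s = ⨆ _ : ℕ, (0 : ℝ) := by unfold reach; exact iSup_congr hall
      _ = 0 := ciSup_const
end

section
/- Fix a probability space (Ω, F, P) and a measurable space (S, 𝒮). Let (X_t)_{t∈ℕ} be an S-valued Markov process on Ω (i.e. each X_t is measurable and for every t and A ∈ 𝒮 the conditional probability of {X_t ∈ A} given σ(X_0,…,X_{t−1}) coincides almost surely with the conditional probability given σ(X_{t−1})), let A_t ∈ 𝒮 be measurable events, ε > 0, and for each t let g_t be a σ(X_{t−1})-measurable version of the conditional probability P[X_t ∈ A_t | X_{t−1}]. Let Ω' = {ω ∈ Ω : g_t(ω) > ε for infinitely many t}, and assume each set {ω : g_t(ω) > ε} is measurable and P(Ω') > 0. Then P[{ω ∈ Ω' : X_t(ω) ∈ A_t for infinitely many t}] = P(Ω'); in other words, almost every ω ∈ Ω' satisfies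 X_t(ω) ∈ A_t for infinitely many t. -/
/-!
STATEMENT 14: Repeating events in Markov processes. If, on a set Ω' of positive
measure, the conditional probability of the event {X_t ∈ A_t} given X_{t−1} exceeds
ε for infinitely many t, then almost every ω ∈ Ω' actually satisfies X_t(ω) ∈ A_t
for infinitely many t.
-/

open MeasureTheory
open Filter

lemma sum_tendsto_atTop_of_infinite_gt {f : ℕ → ℝ} {ε : ℝ} (hε : 0 < ε)
    (hf : ∀ k, 0 ≤ f k) (hinf : {t | ε < f t}.Infinite) :
    Tendsto (fun n => ∑ k ∈ Finset.range n, f k) atTop atTop := by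
  apply tendsto_atTop_atTop_of_monotone
  · intro n m h
    exact Finset.sum_le_sum_of_subset_of_nonneg (Finset.range_subset_range.2 h)
      (fun i _ _ => hf i)
  · intro b
    obtain ⟨m, hm⟩ := exists_nat_ge (b / ε)
    obtain ⟨t, hts, hcard⟩ := hinf.exists_subset_card_eq m
    refine ⟨(t.sup id) + 1, ?_⟩
    have h1 : b ≤ m * ε := by
      rw [div_le_iff₀ hε] at hm
      linarith [hm]
    have h2 : (m : ℝ) * ε ≤ ∑ k ∈ t, f k := by
      calc (m : ℝ) * ε = ∑ _k ∈ t, ε := by rw [Finset.sum_const, hcard, nsmul_eq_mul]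
        _ ≤ ∑ k ∈ t, f k := Finset.sum_le_sum fun i hi => (hts hi).le
    have h3 : ∑ k ∈ t, f k ≤ ∑ k ∈ Finset.range (t.sup id + 1), f k := by
      refine Finset.sum_le_sum_of_subset_of_nonneg ?_ (fun i _ _ => hf i)
      intro i hi
      exact Finset.mem_range.2 (Nat.lt_succ_of_le (Finset.le_sup (f := id) hi))
    linarith

lemma infinite_preimage_succ {T : Set ℕ} (hT : T.Infinite) :
    {t : ℕ | t + 1 ∈ T}.Infinite := by
  by_contra h
  rw [Set.not_infinite] at h
  have : T ⊆ insert 0 ((· + 1) '' {t : ℕ | t + 1 ∈ T}) := by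
    intro n hn
    cases n with
    | zero => exact Set.mem_insert _ _
    | succ m => exact Set.mem_insert_of_mem _ ⟨m, hn, rfl⟩
  exact hT (Set.Finite.subset ((h.image _).insert 0) this)


theorem markov_process_repeating
    {Ω : Type*} [MeasurableSpace Ω] (μ : Measure Ω) [IsProbabilityMeasure μ]
    {S : Type*} [MeasurableSpace S]
    (X : ℕ → Ω → S) (hX : ∀ t, Measurable (X t))
    (A : ℕ → Set S) (hA : ∀ t, MeasurableSet (A t))
    -- Markov property: conditioning on the whole past is the same as conditioning on
    -- the previous state.
    (hMarkov : ∀ (t : ℕ) (B : Set S), MeasurableSet B →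
      μ[(X (t + 1) ⁻¹' B).indicator (fun _ => (1 : ℝ)) |
          ⨆ i ∈ Finset.range (t + 1), MeasurableSpace.comap (X i) inferInstance]
        =ᵐ[μ]
      μ[(X (t + 1) ⁻¹' B).indicator (fun _ => (1 : ℝ)) |
          MeasurableSpace.comap (X t) inferInstance])
    (ε : ℝ) (hε : 0 < ε)
    -- g (t+1) is a σ(X t)-measurable version of the conditional probability
    -- P[X_{t+1} ∈ A_{t+1} | X_t].
    (g : ℕ → Ω → ℝ)
    (hg_meas : ∀ t, Measurable[MeasurableSpace.comap (X t) inferInstance] (g (t + 1)))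
    (hg_ver : ∀ t, g (t + 1) =ᵐ[μ]
      μ[(X (t + 1) ⁻¹' A (t + 1)).indicator (fun _ => (1 : ℝ)) |
          MeasurableSpace.comap (X t) inferInstance])
    (hsets : ∀ t, MeasurableSet {ω | ε < g (t + 1) ω})
    (Ω' : Set Ω) (hΩ' : Ω' = {ω | {t : ℕ | ε < g (t + 1) ω}.Infinite})
    (hpos : 0 < μ Ω') :
    μ {ω | ω ∈ Ω' ∧ {t : ℕ | X (t + 1) ω ∈ A (t + 1)}.Infinite} = μ Ω' := by
  classical
  -- the natural filtration
  set ℱ : Filtration ℕ ‹MeasurableSpace Ω› :=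
    { seq := fun n => ⨆ i ∈ Finset.range (n + 1), MeasurableSpace.comap (X i) inferInstance
      mono' := by
        intro n m hnm
        refine iSup₂_le fun i hi => ?_
        exact le_iSup₂ (f := fun i (_ : i ∈ Finset.range (m + 1)) =>
            MeasurableSpace.comap (X i) inferInstance) i
          (Finset.mem_range.2 ((Finset.mem_range.1 hi).trans_le (Nat.succ_le_succ hnm)))
      le' := fun n => iSup₂_le fun i _ => (hX i).comap_le }
  set s : ℕ → Set Ω := fun n => X n ⁻¹' A n with hs_def
  have hs : ∀ n, MeasurableSet[ℱ n] (s n) := by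
    intro n
    have h1 : MeasurableSet[MeasurableSpace.comap (X n) inferInstance] (s n) :=
      ⟨A n, hA n, rfl⟩
    exact (le_iSup₂ (f := fun i (_ : i ∈ Finset.range (n + 1)) =>
        MeasurableSpace.comap (X i) inferInstance) n
      (Finset.mem_range.2 (Nat.lt_succ_self n))) _ h1
  -- Lévy's generalized Borel–Cantelli
  have hBC := ae_mem_limsup_atTop_iff (ℱ := ℱ) μ hs
  -- the conditional expectations a.e. equal g
  have hcond : ∀ k, (μ[(s (k + 1)).indicator (1 : Ω → ℝ) | ℱ k]) =ᵐ[μ] g (k + 1) := by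
    intro k
    have h1 := hMarkov k (A (k + 1)) (hA (k + 1))
    exact h1.trans (hg_ver k).symm
  have hnn : ∀ k, 0 ≤ᵐ[μ] (μ[(s (k + 1)).indicator (1 : Ω → ℝ) | ℱ k]) := by
    intro k
    exact condExp_nonneg (Eventually.of_forall fun ω =>
      Set.indicator_nonneg (fun _ _ => zero_le_one) ω)
  have hae : ∀ᵐ ω ∂μ, ω ∈ Ω' → {t : ℕ | X (t + 1) ω ∈ A (t + 1)}.Infinite := by
    have hc : ∀ᵐ ω ∂μ, ∀ k, (μ[(s (k + 1)).indicator (1 : Ω → ℝ) | ℱ k]) ω = g (k + 1) ω :=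
      ae_all_iff.2 fun k => hcond k
    have hn : ∀ᵐ ω ∂μ, ∀ k, 0 ≤ (μ[(s (k + 1)).indicator (1 : Ω → ℝ) | ℱ k]) ω :=
      ae_all_iff.2 fun k => hnn k
    filter_upwards [hBC, hc, hn] with ω hω hcω hnω hmem
    rw [hΩ'] at hmem
    have htend : Tendsto (fun n => ∑ k ∈ Finset.range n,
        (μ[(s (k + 1)).indicator (1 : Ω → ℝ) | ℱ k]) ω) atTop atTop := by
      apply sum_tendsto_atTop_of_infinite_gt hε hnω
      apply Set.Infinite.mono _ hmem
      intro t ht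
      simp only [Set.mem_setOf_eq] at ht ⊢
      rw [hcω t]
      exact ht
    have hlim : ω ∈ limsup s atTop := hω.2 htend
    have hfreq : {n : ℕ | ω ∈ s n}.Infinite := by
      rw [← Nat.cofinite_eq_atTop, Filter.cofinite.limsup_set_eq] at hlim
      exact hlim
    exact infinite_preimage_succ hfreq
  have hsub : Ω' \ {ω | ω ∈ Ω' ∧ {t : ℕ | X (t + 1) ω ∈ A (t + 1)}.Infinite} ⊆
      {ω | ¬ (ω ∈ Ω' → {t : ℕ | X (t + 1) ω ∈ A (t + 1)}.Infinite)} := by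
    intro ω hω
    simp only [Set.mem_diff, Set.mem_setOf_eq] at hω
    exact fun h => hω.2 ⟨hω.1, h hω.1⟩
  have hnull : μ (Ω' \ {ω | ω ∈ Ω' ∧ {t : ℕ | X (t + 1) ω ∈ A (t + 1)}.Infinite}) = 0 :=
    measure_mono_null hsub (by rwa [ae_iff] at hae)
  have heq : {ω | ω ∈ Ω' ∧ {t : ℕ | X (t + 1) ω ∈ A (t + 1)}.Infinite} =ᵐ[μ] Ω' := by
    rw [MeasureTheory.ae_eq_set]
    constructor
    · rw [Set.diff_eq_empty.2 (fun ω h => h.1)]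
      exact measure_empty
    · exact hnull
  exact measure_congr heq
end
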